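/- arXiv:1903.04577 — 4 statements merged into one kernel-verified Lean document; each statement's English description precedes it below -/
import Mathlib

section
/- If p = 1 + b + ... + b^(q-1) is a Brazilian prime (b ≥ 2, q ≥ 3) and p is also a Sophie Germain prime (2p + 1 is prime), then p ≡ 2 (mod 3), q ≡ 2 (mod 3), and b ≡ 1 (mod 3). -/
/-!
Since b ≥ 2 and q ≥ 3, p ≥ 7, so neither p nor 2p + 1 can be divisible by 3; this forces
p ≡ 2 (mod 3). Modulo 3 the geometric sum 1 + b + ⋯ + b^(q-1) only takes the values 0 and 1 when
b ≡ 0 or b ≡ -1, so b ≡ 1 and then p ≡ q.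
-/

open Finset

theorem Nat.Prime.mod_three_eq_two_of_prime_two_mul_add_one {p : ℕ} (hp : p.Prime)
    (hsg : (2 * p + 1).Prime) (hp3 : p ≠ 3) : p % 3 = 2 := by
  have h3p : ¬ 3 ∣ p := fun h ↦
    hp3 ((Nat.prime_dvd_prime_iff_eq Nat.prime_three hp).1 h).symm
  have h3sg : ¬ 3 ∣ 2 * p + 1 := fun h ↦ by
    have := (Nat.prime_dvd_prime_iff_eq Nat.prime_three hsg).1 h
    have := hp.two_le
    omega
  omega

theorem ZMod.geom_sum_eq_two_iff {x : ZMod 3} {n : ℕ} :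
    ∑ i ∈ range n, x ^ i = 2 ↔ x = 1 ∧ (n : ZMod 3) = 2 := by
  obtain rfl | rfl | rfl : x = 0 ∨ x = 1 ∨ x = -1 := by revert x; decide
  · rw [zero_geom_sum]
    split_ifs <;> exact iff_of_false (by decide) fun h ↦ absurd h.1 (by decide)
  · simp
  · rw [neg_one_geom_sum]
    split_ifs <;> exact iff_of_false (by decide) fun h ↦ absurd h.1 (by decide)

theorem Nat.seven_le_geom_sum {b q : ℕ} (hb : 2 ≤ b) (hq : 3 ≤ q) :
    7 ≤ ∑ i ∈ range q, b ^ i :=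
  calc 7 ≤ ∑ i ∈ range 3, b ^ i := by simp only [sum_range_succ, sum_range_zero]; nlinarith
    _ ≤ ∑ i ∈ range q, b ^ i := sum_le_sum_of_subset (range_subset_range.2 hq)

theorem stmt_1 (b q p : ℕ) (hb : 2 ≤ b) (hq : 3 ≤ q)
    (hp : p = ∑ i ∈ Finset.range q, b ^ i) (hpp : p.Prime)
    (hsg : (2 * p + 1).Prime) :
    p % 3 = 2 ∧ q % 3 = 2 ∧ b % 3 = 1 := by
  have hp7 : 7 ≤ p := hp ▸ Nat.seven_le_geom_sum hb hq
  have hp3 : p % 3 = 2 := hpp.mod_three_eq_two_of_prime_two_mul_add_one hsg (by omega)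
  have hsum : ∑ i ∈ range q, (b : ZMod 3) ^ i = 2 := by
    have hpz : (p : ZMod 3) = 2 := by rw [← ZMod.natCast_mod, hp3]; rfl
    simpa [hp] using hpz
  obtain ⟨hb1, hq2⟩ := ZMod.geom_sum_eq_two_iff.1 hsum
  refine ⟨hp3, ?_, ?_⟩
  · rw [← ZMod.val_natCast, hq2]; rfl
  · rw [← ZMod.val_natCast, hb1]; rfl
end

section
/- The only prime p that is both a Brazilian prime and a safe prime is p = 7. -/
/-!
Write `p = b s + 1` with `s = 1 + b + ⋯ + b^(q-2) ≥ b + 1 ≥ 3`. Then `b s = p - 1 = 2 r` with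
`r` prime, and since `s > 2` the only possible split is `b = 2`, `s = r`. Hence `p = 2^q - 1`
and `r = 2^(q-1) - 1` are both Mersenne primes, so `q` and `q - 1` are both prime, forcing
`q = 3` and `p = 7`.
-/

open Finset

lemma Nat.eq_two_of_mul_eq_two_mul_prime {b s r : ℕ} (hr : r.Prime) (hb : 1 < b) (hs : 2 < s)
    (h : b * s = 2 * r) : b = 2 := by
  rcases hr.dvd_mul.mp (Dvd.intro_left 2 h.symm) with hrb | hrs
  · have := Nat.le_of_dvd (by omega) hrb
    nlinarith [hr.pos]
  · have := Nat.le_of_dvd (by omega) hrs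
    nlinarith

lemma Nat.sum_range_two_pow (n : ℕ) : ∑ i ∈ range n, 2 ^ i = mersenne n := by
  simp [Nat.geomSum_eq le_rfl, mersenne]

lemma Nat.Prime.eq_three_of_prime_sub_one {q : ℕ} (hq : q.Prime) (hq' : (q - 1).Prime) :
    q = 3 := by
  have := hq'.two_le
  rcases hq.eq_two_or_odd with h | h <;> rcases hq'.eq_two_or_odd with h' | h' <;> omega

lemma Nat.add_one_le_geom_sum {b m : ℕ} (hm : 2 ≤ m) : b + 1 ≤ ∑ i ∈ range m, b ^ i :=
  geom_sum_two (x := b) ▸ sum_le_sum_of_subset (range_subset_range.2 hm)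

theorem stmt_6 (p : ℕ) (hp : p.Prime)
    (hB : ∃ b q : ℕ, 1 < b ∧ b < p - 1 ∧ 3 ≤ q ∧ p = ∑ i ∈ Finset.range q, b ^ i)
    (hsafe : Nat.Prime ((p - 1) / 2)) :
    p = 7 := by
  obtain ⟨b, _ | m, hb, -, hm, rfl⟩ := hB
  · omega
  have hs : b + 1 ≤ ∑ i ∈ range m, b ^ i := Nat.add_one_le_geom_sum (by omega)
  rw [geom_sum_succ] at hp hsafe ⊢
  generalize hs_def : ∑ i ∈ range m, b ^ i = s at hs hp hsafe ⊢
  have hodd : (b * s + 1) % 2 = 1 := hp.eq_two_or_odd.resolve_left (by nlinarith)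
  obtain rfl : b = 2 := Nat.eq_two_of_mul_eq_two_mul_prime (s := s) hsafe hb (by omega) (by omega)
  rw [Nat.sum_range_two_pow] at hs_def
  subst hs_def
  rw [← mersenne_succ] at hp ⊢
  rw [Nat.add_sub_cancel, Nat.mul_div_cancel_left _ two_pos] at hsafe
  rw [hp.of_mersenne.eq_three_of_prime_sub_one hsafe.of_mersenne]
  rfl
end

section
/- If p = 1 + b + ... + b^(q-1) is prime with b ≥ 2 and q ≥ 3, and 2p + 1 is also prime, then q ≠ 3; that is, no Sophie Germain prime is a base-b repunit of length 3 for any b ≥ 2. -/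
/-!
Modulo 3, `b² + b + 1` vanishes when `b ≡ 1`, and equals `1` otherwise, in which case
`2 (b² + b + 1) + 1 ≡ 0`. So one of `p = b² + b + 1` and `2p + 1` is a multiple of 3, hence equal
to 3, which `b ≥ 2` rules out.
-/

lemma sum_range_three_pow (b : ℕ) : ∑ i ∈ Finset.range 3, b ^ i = b ^ 2 + b + 1 := by
  simp only [Finset.sum_range_succ, Finset.sum_range_zero]
  ring

lemma three_dvd_or_three_dvd_two_mul_add_one (b : ℕ) :
    3 ∣ b ^ 2 + b + 1 ∨ 3 ∣ 2 * (b ^ 2 + b + 1) + 1 := by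
  have key : ∀ x : ZMod 3, x ^ 2 + x + 1 = 0 ∨ 2 * (x ^ 2 + x + 1) + 1 = 0 := by decide
  simpa only [← ZMod.natCast_eq_zero_iff, Nat.cast_add, Nat.cast_mul, Nat.cast_pow,
    Nat.cast_one, Nat.cast_ofNat] using key b

theorem stmt_17_general (b q p : ℕ) (hb : 2 ≤ b)
    (hp : p = ∑ i ∈ Finset.range q, b ^ i) (hpp : p.Prime)
    (hsg : (2 * p + 1).Prime) :
    q ≠ 3 := by
  rintro rfl
  rw [sum_range_three_pow] at hp
  subst hp
  have hb2 : 4 ≤ b ^ 2 := by nlinarith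
  rcases three_dvd_or_three_dvd_two_mul_add_one b with h | h
  · have := (Nat.prime_dvd_prime_iff_eq Nat.prime_three hpp).mp h
    omega
  · have := (Nat.prime_dvd_prime_iff_eq Nat.prime_three hsg).mp h
    omega

theorem stmt_17 (b q p : ℕ) (hb : 2 ≤ b) (hq : 3 ≤ q)
    (hp : p = ∑ i ∈ Finset.range q, b ^ i) (hpp : p.Prime)
    (hsg : (2 * p + 1).Prime) :
    q ≠ 3 :=
  stmt_17_general b q p hb hp hpp hsg
end

section
/- If p = 1 + b + ... + b^(q-1) is prime with b ≥ 2 and q ≥ 3, and 2p + 1 is also prime, then q ≠ 7 and q ≠ 13; that is, the repunit length q of a Brazilian Sophie Germain prime cannot be congruent to 1 modulo 3. -/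
/-!
A Sophie Germain prime `p ≠ 3` is `≡ 2 (mod 3)`: otherwise `3` divides `p` or `2p + 1`.
Modulo 3 the base is `0`, `1` or `-1`, and for `q ≡ 1 (mod 3)` the repunit
`1 + b + ⋯ + b^(q-1)` is then `1`, `q ≡ 1` or `0`/`1` (by the parity of `q`), never `2`.
-/

open Finset

theorem ZMod.geom_sum_ne_neg_one_of_mod_three_eq_one (x : ZMod 3) {q : ℕ} (hq : q % 3 = 1) :
    ∑ i ∈ range q, x ^ i ≠ -1 := by
  have hq' : (q : ZMod 3) = 1 := by rw [← ZMod.natCast_mod, hq, Nat.cast_one]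
  obtain rfl | rfl | rfl : x = 0 ∨ x = 1 ∨ x = -1 := by revert x; decide
  · rw [zero_geom_sum, if_neg (by omega)]; decide
  · rw [one_geom_sum, hq']; decide
  · rw [neg_one_geom_sum]
    split_ifs <;> decide

theorem Nat.geom_sum_mod_three_ne_two (b : ℕ) {q : ℕ} (hq : q % 3 = 1) :
    (∑ i ∈ range q, b ^ i) % 3 ≠ 2 := by
  intro h
  have hcast := (ZMod.natCast_eq_natCast_iff' (∑ i ∈ range q, b ^ i) 2 3).mpr h
  push_cast at hcast
  exact ZMod.geom_sum_ne_neg_one_of_mod_three_eq_one (b : ZMod 3) hq (hcast.trans rfl)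

theorem stmt_18 (b q p : ℕ) (hb : 2 ≤ b) (hq : 3 ≤ q)
    (hp : p = ∑ i ∈ Finset.range q, b ^ i) (hpp : p.Prime)
    (hsg : (2 * p + 1).Prime) :
    q ≠ 7 ∧ q ≠ 13 ∧ q % 3 ≠ 1 := by
  have hp3 : p ≠ 3 := by have := Nat.seven_le_geom_sum hb hq; omega
  have hmod : p % 3 = 2 := hpp.mod_three_eq_two_of_prime_two_mul_add_one hsg hp3
  have hq3 : q % 3 ≠ 1 := fun hq1 => Nat.geom_sum_mod_three_ne_two b hq1 (hp ▸ hmod)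
  omega
end
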